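/- Let (Ω, F, μ) be a probability space and E a finite-dimensional real inner product space. Let ℓ : E → ℝ be a differentiable function whose gradient is L-Lipschitz (‖∇ℓ(x) − ∇ℓ(y)‖ ≤ L‖x − y‖ for all x, y). Let (Xₙ) be measurable random vectors Ω → E and (Dₙ) differentiable maps E → E. Assume: (i) ‖Dₙ(Xₙ) − Xₙ‖ → 0 in probability; (ii) the operator norm ‖fderiv Dₙ(Xₙ) − id‖ → 0 in probability; (iii) there is a constant M such that for every n, ‖∇ℓ(Dₙ(Xₙ))‖ ≤ M almost everywhere. Then the sequence ‖∇(ℓ ∘ Dₙ)(Xₙ) − ∇ℓ(Xₙ)‖ converges to 0 in probability, where ∇(ℓ ∘ Dₙ) denotes the gradient of the composed map ℓ ∘ Dₙ. -/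

import Mathlib

open MeasureTheory Filter Topology

/-! By the chain rule, `∇(ℓ ∘ D)(x) - ∇ℓ(x)` is the Riesz representative of
`fderiv ℓ (D x) ∘ (fderiv D x - id)` plus `∇ℓ(D x) - ∇ℓ(x)`; hence its norm is at most
`‖∇ℓ(D x)‖ ‖fderiv D x - id‖ + L ‖D x - x‖ ≤ M ‖fderiv D x - id‖ + L ‖D x - x‖` almost surely.
Convergence in measure to `0` is preserved by linear combinations and by almost-sure domination,
so the right-hand side, and with it the gradient error, tends to `0` in probability. -/

namespace ContinuousLinearMap

theorem norm_comp_sub_le {𝕜 E F : Type*} [NontriviallyNormedField 𝕜]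
    [SeminormedAddCommGroup E] [NormedSpace 𝕜 E] [SeminormedAddCommGroup F] [NormedSpace 𝕜 F]
    (f g : E →L[𝕜] F) (J : E →L[𝕜] E) :
    ‖f.comp J - g‖ ≤ ‖f‖ * ‖J - ContinuousLinearMap.id 𝕜 E‖ + ‖f - g‖ :=
  calc ‖f.comp J - g‖ = ‖f.comp (J - ContinuousLinearMap.id 𝕜 E) + (f - g)‖ := by
        rw [comp_sub, comp_id, sub_add_sub_cancel]
    _ ≤ ‖f.comp (J - ContinuousLinearMap.id 𝕜 E)‖ + ‖f - g‖ := norm_add_le _ _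
    _ ≤ ‖f‖ * ‖J - ContinuousLinearMap.id 𝕜 E‖ + ‖f - g‖ := by gcongr; exact opNorm_comp_le _ _

end ContinuousLinearMap

section Gradient

variable {E : Type*} [NormedAddCommGroup E] [InnerProductSpace ℝ E] [CompleteSpace E]

theorem norm_gradient (f : E → ℝ) (x : E) : ‖gradient f x‖ = ‖fderiv ℝ f x‖ :=
  LinearIsometryEquiv.norm_map _ _

theorem norm_gradient_sub_gradient (f g : E → ℝ) (x y : E) :
    ‖gradient f x - gradient g y‖ = ‖fderiv ℝ f x - fderiv ℝ g y‖ := by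
  rw [gradient, gradient, ← map_sub]
  exact LinearIsometryEquiv.norm_map _ _

theorem norm_gradient_comp_sub_gradient_le {ℓ : E → ℝ} {D : E → E} {x : E}
    (hℓ : DifferentiableAt ℝ ℓ (D x)) (hD : DifferentiableAt ℝ D x) :
    ‖gradient (ℓ ∘ D) x - gradient ℓ x‖ ≤
      ‖gradient ℓ (D x)‖ * ‖fderiv ℝ D x - ContinuousLinearMap.id ℝ E‖ +
        ‖gradient ℓ (D x) - gradient ℓ x‖ := by
  rw [norm_gradient_sub_gradient, norm_gradient_sub_gradient, norm_gradient, fderiv_comp x hℓ hD]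
  exact (fderiv ℝ ℓ (D x)).norm_comp_sub_le _ _

end Gradient

namespace MeasureTheory

variable {α ι E F : Type*} {m : MeasurableSpace α} {μ : Measure α} {l : Filter ι}

theorem TendstoInMeasure.of_ae_dist_le [PseudoMetricSpace E] [PseudoMetricSpace F]
    {f : ι → α → E} {f₀ : α → E} {g : ι → α → F} {g₀ : α → F}
    (hg : TendstoInMeasure μ g l g₀)
    (hfg : ∀ i, ∀ᵐ x ∂μ, dist (f i x) (f₀ x) ≤ dist (g i x) (g₀ x)) :
    TendstoInMeasure μ f l f₀ := by
  rw [tendstoInMeasure_iff_dist] at hg ⊢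
  refine fun ε hε => tendsto_of_tendsto_of_tendsto_of_le_of_le tendsto_const_nhds (hg ε hε)
    (fun _ => zero_le) fun i => measure_mono_ae ?_
  filter_upwards [hfg i] with x hx hεx
  exact hεx.trans hx

theorem TendstoInMeasure.norm [SeminormedAddCommGroup E] {f : ι → α → E} {f₀ : α → E}
    (hf : TendstoInMeasure μ f l f₀) :
    TendstoInMeasure μ (fun i x => ‖f i x‖) l (fun x => ‖f₀ x‖) :=
  hf.of_ae_dist_le fun _ => ae_of_all _ fun _ =>
    (dist_norm_norm_le _ _).trans_eq (dist_eq_norm _ _).symm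

theorem TendstoInMeasure.add [SeminormedAddCommGroup E] {f g : ι → α → E} {f₀ g₀ : α → E}
    (hf : TendstoInMeasure μ f l f₀) (hg : TendstoInMeasure μ g l g₀) :
    TendstoInMeasure μ (f + g) l (f₀ + g₀) := by
  rw [tendstoInMeasure_iff_norm] at hf hg ⊢
  intro ε hε
  have hsum := (hf (ε / 2) (half_pos hε)).add (hg (ε / 2) (half_pos hε))
  rw [add_zero] at hsum
  refine tendsto_of_tendsto_of_tendsto_of_le_of_le tendsto_const_nhds hsum
    (fun _ => zero_le) fun i => (measure_mono fun x hx => ?_).trans (measure_union_le _ _)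
  by_contra hsmall
  simp only [Set.mem_union, Set.mem_ofPred_eq, not_or, not_le] at hsmall
  simp only [Pi.add_apply, Set.mem_ofPred_eq, add_sub_add_comm] at hx
  linarith [norm_add_le (f i x - f₀ x) (g i x - g₀ x)]

theorem TendstoInMeasure.const_smul {𝕜 : Type*} [NormedField 𝕜] [SeminormedAddCommGroup E]
    [NormedSpace 𝕜 E] {f : ι → α → E} {f₀ : α → E} (hf : TendstoInMeasure μ f l f₀) (c : 𝕜) :
    TendstoInMeasure μ (c • f) l (c • f₀) := by
  rcases eq_or_ne c 0 with rfl | hc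
  · intro ε hε
    simpa [hε.ne'] using tendsto_const_nhds
  rw [tendstoInMeasure_iff_norm] at hf ⊢
  intro ε hε
  convert hf (ε / ‖c‖) (by positivity) using 3 with i
  ext x
  simp [← smul_sub, norm_smul, div_le_iff₀' (norm_pos_iff.2 hc)]

end MeasureTheory

theorem gradient_through_denoiser_in_probability_general
    {Ω : Type*} [MeasurableSpace Ω] (μ : Measure Ω)
    {E : Type*} [NormedAddCommGroup E] [InnerProductSpace ℝ E] [FiniteDimensional ℝ E]
    (ℓ : E → ℝ) (hℓ : Differentiable ℝ ℓ) (L : ℝ)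
    (hLip : ∀ x y : E, ‖gradient ℓ x - gradient ℓ y‖ ≤ L * ‖x - y‖)
    (X : ℕ → Ω → E)
    (D : ℕ → E → E) (hD : ∀ n, Differentiable ℝ (D n))
    (hdenoise : ∀ ε : ℝ, 0 < ε →
      Tendsto (fun n => μ {ω | ε ≤ ‖D n (X n ω) - X n ω‖}) atTop (𝓝 0))
    (hjac : ∀ ε : ℝ, 0 < ε →
      Tendsto (fun n => μ {ω | ε ≤ ‖fderiv ℝ (D n) (X n ω) - ContinuousLinearMap.id ℝ E‖})
        atTop (𝓝 0))
    (M : ℝ) (hbd : ∀ n, ∀ᵐ ω ∂μ, ‖gradient ℓ (D n (X n ω))‖ ≤ M) :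
    ∀ ε : ℝ, 0 < ε →
      Tendsto (fun n => μ {ω | ε ≤ ‖gradient (ℓ ∘ D n) (X n ω) - gradient ℓ (X n ω)‖})
        atTop (𝓝 0) := by
  set U := fun n ω => fderiv ℝ (D n) (X n ω) - ContinuousLinearMap.id ℝ E
  set V := fun n ω => D n (X n ω) - X n ω
  have hU : TendstoInMeasure μ U atTop 0 := by
    simpa [tendstoInMeasure_iff_norm] using hjac
  have hV : TendstoInMeasure μ V atTop 0 := by
    simpa [tendstoInMeasure_iff_norm] using hdenoise
  have hW : TendstoInMeasure μ (fun n ω => M * ‖U n ω‖ + L * ‖V n ω‖) atTop 0 := by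
    convert (hU.norm.const_smul M).add (hV.norm.const_smul L) using 1 <;> ext <;> simp
  have hG : TendstoInMeasure μ
      (fun n ω => gradient (ℓ ∘ D n) (X n ω) - gradient ℓ (X n ω)) atTop 0 := by
    refine hW.of_ae_dist_le fun n => ?_
    filter_upwards [hbd n] with ω hω
    simp only [Pi.zero_apply, dist_zero_right, Real.norm_eq_abs]
    calc _ ≤ ‖gradient ℓ (D n (X n ω))‖ * ‖U n ω‖ +
          ‖gradient ℓ (D n (X n ω)) - gradient ℓ (X n ω)‖ :=
          norm_gradient_comp_sub_gradient_le (hℓ _) (hD n _)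
      _ ≤ M * ‖U n ω‖ + L * ‖V n ω‖ := by gcongr; exact hLip _ _
      _ ≤ |M * ‖U n ω‖ + L * ‖V n ω‖| := le_abs_self _
  simpa [tendstoInMeasure_iff_norm] using hG

/-- **Asymptotic validity of constraint gradient substitution (full form).**
If `ℓ` is differentiable with `L`-Lipschitz gradient, the `Dₙ` are differentiable,
`‖Dₙ(Xₙ) − Xₙ‖ → 0` in probability, the Jacobians of the `Dₙ` at `Xₙ` converge to the
identity in operator norm in probability, and `‖∇ℓ(Dₙ(Xₙ))‖` is a.e. bounded by `M`,
then `‖∇(ℓ ∘ Dₙ)(Xₙ) − ∇ℓ(Xₙ)‖ → 0` in probability. -/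
theorem gradient_through_denoiser_in_probability
    {Ω : Type*} [MeasurableSpace Ω] (μ : Measure Ω) [IsProbabilityMeasure μ]
    {E : Type*} [NormedAddCommGroup E] [InnerProductSpace ℝ E] [FiniteDimensional ℝ E]
    [MeasurableSpace E] [BorelSpace E]
    (ℓ : E → ℝ) (hℓ : Differentiable ℝ ℓ) (L : ℝ)
    (hLip : ∀ x y : E, ‖gradient ℓ x - gradient ℓ y‖ ≤ L * ‖x - y‖)
    (X : ℕ → Ω → E) (hX : ∀ n, Measurable (X n))
    (D : ℕ → E → E) (hD : ∀ n, Differentiable ℝ (D n))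
    (hdenoise : ∀ ε : ℝ, 0 < ε →
      Tendsto (fun n => μ {ω | ε ≤ ‖D n (X n ω) - X n ω‖}) atTop (𝓝 0))
    (hjac : ∀ ε : ℝ, 0 < ε →
      Tendsto (fun n => μ {ω | ε ≤ ‖fderiv ℝ (D n) (X n ω) - ContinuousLinearMap.id ℝ E‖})
        atTop (𝓝 0))
    (M : ℝ) (hbd : ∀ n, ∀ᵐ ω ∂μ, ‖gradient ℓ (D n (X n ω))‖ ≤ M) :
    ∀ ε : ℝ, 0 < ε →
      Tendsto (fun n => μ {ω | ε ≤ ‖gradient (ℓ ∘ D n) (X n ω) - gradient ℓ (X n ω)‖})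
        atTop (𝓝 0) :=
  gradient_through_denoiser_in_probability_general μ ℓ hℓ L hLip X D hD hdenoise hjac M hbd
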